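/- arXiv:2212.04879 — 8 statements merged into one kernel-verified Lean document; each statement's English description precedes it below -/
import Mathlib

section
/- For every δ > 0 there exists η₁ > 0 such that for all η ∈ (0, η₁) and every s ∈ ℂ satisfying the characteristic equation f_η(s)² − f_η(s)·e^{−s} − 1 = 0, one has Re(s) ≤ −ln 2 + δ. -/
/-- `λ₁(η,s) = (1 + √(1+4ηs))/(2η)`, principal branch of the complex square root. -/
noncomputable def lam1 (η : ℝ) (s : ℂ) : ℂ :=
  (1 + (1 + 4 * (η : ℂ) * s) ^ ((1 : ℂ) / 2)) / (2 * (η : ℂ))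

/-- `λ₂(η,s) = (1 − √(1+4ηs))/(2η)`. -/
noncomputable def lam2 (η : ℝ) (s : ℂ) : ℂ :=
  (1 - (1 + 4 * (η : ℂ) * s) ^ ((1 : ℂ) / 2)) / (2 * (η : ℂ))

/-- Transfer function of the viscous transport system. -/
noncomputable def f (η : ℝ) (s : ℂ) : ℂ :=
  (lam1 η s - lam2 η s) /
    (lam1 η s * Complex.exp (-(lam2 η s)) - lam2 η s * Complex.exp (-(lam1 η s)))

/-!
Write `r = √(1+4ηs)` (so `Re r ≥ 0`) and `z = -λ₂ = (r-1)/(2η)`; then `s = z + ηz²` and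
`f(s) e^z = 2r / ((1+r) - (1-r) e^{-r/η})`. Suppose `Re s > -log 2`, so `|e^{-s}| < 2`. The
characteristic equation `f (f - e^{-s}) = 1` then keeps `|f|` between `2/5` and `5/2`, and
`Re r ≥ 9/10` makes `e^{-r/η}` exponentially small, so `g = f e^z` has modulus between `2/3`
and `3`. Hence `|Re z| ≤ 3`, which forces `|r - 1| ≤ 4√η`, `|g - 1| ≤ 8√η`, and
`w = ηz²` to satisfy `Re w ≤ 9η`, `|Im w| ≤ 12√η`. Multiplying the characteristic equation by
`e^{2z}` gives `e^{2 Re s} = |g| |g - e^{-w}| e^{2 Re w}`, which is `P |P - 1| + O(√η)` with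
`P = e^{Re w}`, hence at most `1/4 + O(√η)`.
-/

open Complex

namespace ViscousTransport

/-- `λ₁ e^{−λ₂} − λ₂ e^{−λ₁}` multiplied by `2η e^{λ₂}`, written in terms of `r = √(1+4ηs)`. -/
noncomputable def denom (η : ℝ) (r : ℂ) : ℂ := (1 + r) - (1 - r) * exp (-(r / η))

theorem f_mul_exp {η : ℝ} (hη : η ≠ 0) {s r : ℂ}
    (hr : (1 + 4 * (η : ℂ) * s) ^ ((1 : ℂ) / 2) = r) :
    f η s * exp ((r - 1) / (2 * η)) = 2 * r / denom η r := by
  have hη' : (η : ℂ) ≠ 0 := ofReal_ne_zero.mpr hη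
  have hden : lam1 η s * exp (-lam2 η s) - lam2 η s * exp (-lam1 η s) =
      exp ((r - 1) / (2 * η)) * denom η r / (2 * η) := by
    have h1 : -lam1 η s = (r - 1) / (2 * η) + -(r / η) := by rw [lam1, hr]; field_simp; ring
    have h2 : -lam2 η s = (r - 1) / (2 * η) := by rw [lam2, hr]; field_simp; ring
    rw [h1, h2, exp_add, lam1, lam2, hr, denom]; field_simp
  have hnum : lam1 η s - lam2 η s = r / η := by rw [lam1, lam2, hr]; field_simp; ring
  rw [f, hden, hnum]
  field_simp

theorem re_cpow_one_half_nonneg (a : ℂ) : 0 ≤ (a ^ ((1 : ℂ) / 2)).re := by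
  rw [one_div, Complex.cpow_inv_two_re]; positivity

theorem cpow_one_half_mul_self (a : ℂ) : a ^ ((1 : ℂ) / 2) * a ^ ((1 : ℂ) / 2) = a := by
  rw [← sq, one_div, Complex.cpow_ofNat_inv_pow]

theorem eq_add_mul_sq {η : ℝ} (hη : η ≠ 0) {s r z : ℂ} (hr : r * r = 1 + 4 * η * s)
    (hz : r = 1 + 2 * η * z) : s = z + η * z ^ 2 := by
  have hη' : (4 * η : ℂ) ≠ 0 := by exact_mod_cast mul_ne_zero four_ne_zero hη
  apply mul_left_cancel₀ hη'
  rw [hz] at hr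
  linear_combination -hr

theorem norm_bounds_of_mul_sub_eq_one {F e : ℂ} (h : F * (F - e) = 1) (he : ‖e‖ ≤ 2) :
    2 / 5 < ‖F‖ ∧ ‖F‖ ≤ 5 / 2 := by
  have h1 : ‖F‖ * ‖F - e‖ = 1 := by rw [← norm_mul, h, norm_one]
  have h2 : ‖F - e‖ ≤ ‖F‖ + 2 := (norm_sub_le F e).trans (by linarith)
  have h3 : ‖F‖ ≤ ‖F - e‖ + 2 :=
    calc ‖F‖ = ‖(F - e) + e‖ := by rw [sub_add_cancel]
      _ ≤ ‖F - e‖ + ‖e‖ := norm_add_le _ _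
      _ ≤ ‖F - e‖ + 2 := by linarith
  constructor <;> nlinarith [norm_nonneg F, norm_nonneg (F - e)]

theorem le_re_and_norm_le_of_le_re_mul_self {r : ℂ} (hr : 0 ≤ r.re)
    (h : 97 / 100 ≤ (r * r).re) : 9 / 10 ≤ r.re ∧ ‖r‖ ≤ 3 / 2 * r.re := by
  rw [mul_re] at h
  have hn : ‖r‖ ^ 2 = r.re ^ 2 + r.im ^ 2 := by rw [← normSq_eq_norm_sq, normSq_apply]; ring
  have h9 : 9 / 10 ≤ r.re := by nlinarith [sq_nonneg r.im]
  exact ⟨h9, by nlinarith [norm_nonneg r]⟩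

theorem le_re_sqrt_and_norm_le {η : ℝ} (hη : 0 < η) (hη' : η ≤ 1 / 100) {s : ℂ}
    (hs : -7 / 10 ≤ s.re) :
    9 / 10 ≤ ((1 + 4 * (η : ℂ) * s) ^ ((1 : ℂ) / 2)).re ∧
      ‖(1 + 4 * (η : ℂ) * s) ^ ((1 : ℂ) / 2)‖ ≤
        3 / 2 * ((1 + 4 * (η : ℂ) * s) ^ ((1 : ℂ) / 2)).re := by
  refine le_re_and_norm_le_of_le_re_mul_self (re_cpow_one_half_nonneg _) ?_
  rw [cpow_one_half_mul_self, add_re, one_re,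
    show 4 * (η : ℂ) * s = ((4 * η : ℝ) : ℂ) * s by push_cast; ring, re_ofReal_mul]
  nlinarith [mul_nonneg hη.le (by linarith : 0 ≤ s.re + 7 / 10)]

theorem three_mul_mul_exp_neg_div_le {ρ η : ℝ} (hη : 0 < η) (hη' : η ≤ 1 / 100)
    (hρ : 9 / 10 ≤ ρ) : 3 * ρ * Real.exp (-(ρ / η)) ≤ η := by
  set t := ρ / η with ht
  have ht90 : 90 ≤ t := by rw [ht, le_div_iff₀ hη]; linarith
  have hexp : 3 * t ≤ Real.exp t := by
    nlinarith [Real.quadratic_le_exp_of_nonneg (x := t) (by linarith)]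
  have hρt : ρ = η * t := by rw [ht]; field_simp
  rw [hρt, Real.exp_neg, ← div_eq_mul_inv, div_le_iff₀ (Real.exp_pos t)]
  nlinarith

section Denom

variable {η : ℝ} {r : ℂ}

theorem norm_exp_neg_div (η : ℝ) (r : ℂ) : ‖exp (-(r / η))‖ = Real.exp (-(r.re / η)) := by
  rw [norm_exp, neg_re, div_ofReal_re]

theorem norm_one_sub_mul_exp_le (hη : 0 < η) (hη' : η ≤ 1 / 100) (hρ : 9 / 10 ≤ r.re)
    (hr : ‖r‖ ≤ 3 / 2 * r.re) : ‖(1 - r) * exp (-(r / η))‖ ≤ η := by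
  have h1 : ‖1 - r‖ ≤ 3 * r.re := (norm_sub_le 1 r).trans (by rw [norm_one]; linarith)
  rw [norm_mul, norm_exp_neg_div]
  calc ‖1 - r‖ * Real.exp (-(r.re / η)) ≤ 3 * r.re * Real.exp (-(r.re / η)) := by gcongr
    _ ≤ η := three_mul_mul_exp_neg_div_le hη hη' hρ

theorem norm_denom_bounds (hη : 0 < η) (hη' : η ≤ 1 / 100) (hρ : 9 / 10 ≤ r.re)
    (hr : ‖r‖ ≤ 3 / 2 * r.re) : 1 + r.re - η ≤ ‖denom η r‖ ∧ ‖denom η r‖ ≤ 3 * r.re := by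
  have hE := norm_one_sub_mul_exp_le hη hη' hρ hr
  have h1 : 1 + r.re ≤ ‖1 + r‖ := by simpa using re_le_norm (1 + r)
  have h2 : ‖1 + r‖ ≤ 1 + ‖r‖ := (norm_add_le 1 r).trans (by rw [norm_one])
  unfold denom
  constructor
  · linarith [norm_sub_norm_le (1 + r) ((1 - r) * exp (-(r / η)))]
  · linarith [norm_sub_le (1 + r) ((1 - r) * exp (-(r / η)))]

theorem norm_two_mul_div_denom_bounds (hη : 0 < η) (hη' : η ≤ 1 / 100) (hρ : 9 / 10 ≤ r.re)
    (hr : ‖r‖ ≤ 3 / 2 * r.re) : 2 / 3 ≤ ‖2 * r / denom η r‖ ∧ ‖2 * r / denom η r‖ ≤ 3 := by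
  obtain ⟨hD1, hD2⟩ := norm_denom_bounds hη hη' hρ hr
  have hD : 0 < ‖denom η r‖ := by linarith
  have hρr : r.re ≤ ‖r‖ := re_le_norm r
  rw [norm_div, norm_mul, Complex.norm_two, le_div_iff₀ hD, div_le_iff₀ hD]
  constructor <;> nlinarith

theorem norm_two_mul_div_denom_sub_one_le (hη : 0 < η) (hη' : η ≤ 1 / 100)
    (hρ : 9 / 10 ≤ r.re) (hr : ‖r‖ ≤ 3 / 2 * r.re) :
    ‖2 * r / denom η r - 1‖ ≤ 2 * ‖r - 1‖ := by
  obtain ⟨hD1, -⟩ := norm_denom_bounds hη hη' hρ hr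
  have hD : denom η r ≠ 0 := norm_pos_iff.mp (by linarith)
  have hE : ‖1 - exp (-(r / η))‖ ≤ 2 := by
    refine (norm_sub_le _ _).trans ?_
    have : 0 ≤ r.re / η := div_nonneg (by linarith) hη.le
    linarith [norm_one (α := ℂ), norm_exp_neg_div η r,
      Real.exp_le_one_iff.mpr (by linarith : -(r.re / η) ≤ 0)]
  have hid : 2 * r / denom η r - 1 = (r - 1) * (1 - exp (-(r / η))) / denom η r := by
    rw [eq_div_iff hD, sub_mul, div_mul_cancel₀ _ hD, denom]; ring
  rw [hid, norm_div, norm_mul, div_le_iff₀ (norm_pos_iff.mpr hD)]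
  nlinarith [norm_nonneg (r - 1)]

end Denom

theorem abs_le_three_of_mul_exp_eq {F G x : ℝ} (hF : 2 / 5 < F) (hF' : F ≤ 5 / 2)
    (hG : 2 / 3 ≤ G) (hG' : G ≤ 3) (h : F * Real.exp x = G) : |x| ≤ 3 := by
  have h3 : 17 / 2 ≤ Real.exp 3 := by
    have := Real.quadratic_le_exp_of_nonneg (x := 3) (by norm_num); norm_num at this; linarith
  rw [abs_le]
  constructor
  · by_contra! hx
    have hlt : Real.exp 3 < Real.exp (-x) := Real.exp_lt_exp.mpr (by linarith)
    have hFG : F = G * Real.exp (-x) := by rw [← h, mul_assoc, ← Real.exp_add]; simp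
    nlinarith
  · by_contra! hx
    have hlt : Real.exp 3 < Real.exp x := Real.exp_lt_exp.mpr hx
    nlinarith

theorem mul_norm_le_two_sqrt {η : ℝ} {s z : ℂ} (hη : 0 < η) (hη' : η ≤ 1 / 100)
    (hs : -7 / 10 ≤ s.re) (hsz : s = z + η * z ^ 2) (hx : |z.re| ≤ 3) :
    η * ‖z‖ ≤ 2 * √η := by
  rw [hsz, add_re, re_ofReal_mul, sq, mul_re] at hs
  rw [abs_le] at hx
  have h4 : η * ‖z‖ ^ 2 ≤ 4 := by
    rw [← normSq_eq_norm_sq, normSq_apply]; nlinarith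
  have hsq : (η * ‖z‖) ^ 2 ≤ (2 * √η) ^ 2 := by
    rw [mul_pow, mul_pow, Real.sq_sqrt hη.le]; nlinarith
  exact abs_le_of_sq_le_sq' hsq (by positivity) |>.2

theorem re_mul_sq_le {η : ℝ} {z : ℂ} (hη : 0 ≤ η) (hx : |z.re| ≤ 3) :
    (η * z ^ 2).re ≤ 9 * η := by
  rw [re_ofReal_mul, sq, mul_re]
  rw [abs_le] at hx
  nlinarith [mul_nonneg hη (mul_self_nonneg z.im),
    mul_nonneg hη (by nlinarith : 0 ≤ 9 - z.re * z.re)]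

theorem abs_im_mul_sq_le {η : ℝ} {z : ℂ} (hη : 0 ≤ η) (hx : |z.re| ≤ 3)
    (hz : η * ‖z‖ ≤ 2 * √η) : |(η * z ^ 2).im| ≤ 12 * √η := by
  have hy : η * |z.im| ≤ 2 * √η := (mul_le_mul_of_nonneg_left (abs_im_le_norm z) hη).trans hz
  rw [im_ofReal_mul, sq, mul_im, abs_mul, abs_of_nonneg hη,
    show z.re * z.im + z.im * z.re = 2 * z.re * z.im by ring, abs_mul, abs_mul, abs_two]
  nlinarith [mul_le_mul hx hy (by positivity) (by norm_num : (0 : ℝ) ≤ 3)]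

/-- The maximum `1/4` of `P (1 - P)`, attained at `P = 1/2`, is where `-log 2` comes from. -/
theorem mul_abs_sub_one_le {P ε : ℝ} (hε : 0 ≤ ε) (hε' : ε ≤ 1 / 4) (hP : P ≤ 1 + 2 * ε) :
    P * |P - 1| ≤ 1 / 4 + 3 * ε := by
  rcases le_or_gt P 1 with h | h
  · rw [abs_of_nonpos (by linarith)]
    nlinarith [sq_nonneg (P - 1 / 2)]
  · rw [abs_of_pos (by linarith)]
    nlinarith

theorem norm_one_sub_exp_neg_le (w : ℂ) :
    ‖1 - exp (-w)‖ ≤ |1 - Real.exp (-w.re)| + Real.exp (-w.re) * |w.im| := by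
  have hsplit : exp (-w) = exp (↑(-w.re)) * exp (I * ↑(-w.im)) := by
    rw [← exp_add]; congr 1; apply Complex.ext <;> simp
  have h1 : ‖1 - exp (↑(-w.re))‖ = |1 - Real.exp (-w.re)| := by
    rw [← ofReal_exp, ← ofReal_one, ← ofReal_sub, norm_real, Real.norm_eq_abs]
  have h2 : ‖exp (I * ↑(-w.im)) - 1‖ ≤ |w.im| := by
    simpa using Real.norm_exp_I_mul_ofReal_sub_one_le (x := -w.im)
  calc ‖1 - exp (-w)‖
      = ‖(1 - exp (↑(-w.re))) - exp (↑(-w.re)) * (exp (I * ↑(-w.im)) - 1)‖ := by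
        rw [hsplit]; congr 1; ring
    _ ≤ ‖1 - exp (↑(-w.re))‖ + ‖exp (↑(-w.re))‖ * ‖exp (I * ↑(-w.im)) - 1‖ :=
        (norm_sub_le _ _).trans_eq (by rw [norm_mul])
    _ ≤ |1 - Real.exp (-w.re)| + Real.exp (-w.re) * |w.im| := by
        rw [h1, norm_exp_ofReal]; gcongr

theorem norm_mul_norm_sub_exp_mul_exp_le {g w : ℂ} {ε : ℝ} (hε : 0 ≤ ε) (hε' : ε ≤ 1 / 1000)
    (hg : ‖g - 1‖ ≤ 8 * ε) (hu : w.re ≤ ε) (hv : |w.im| ≤ 12 * ε) :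
    ‖g‖ * ‖g - exp (-w)‖ * Real.exp (2 * w.re) ≤ 1 / 4 + 30 * ε := by
  set P := Real.exp w.re with hPdef
  have hP0 : 0 < P := Real.exp_pos _
  have hP : P ≤ 1 + 2 * ε := by
    have := Real.exp_bound_div_one_sub_of_interval hε (by linarith)
    have h1 : P ≤ Real.exp ε := Real.exp_le_exp.mpr hu
    rw [le_div_iff₀ (by linarith)] at this
    nlinarith
  have hPinv : Real.exp (-w.re) = P⁻¹ := Real.exp_neg _
  have hexp2 : Real.exp (2 * w.re) = P * P := by rw [two_mul, Real.exp_add]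
  have hgn : ‖g‖ ≤ 1 + 8 * ε := by
    have := norm_add_le (g - 1) 1; rw [sub_add_cancel, norm_one] at this; linarith
  have hW : ‖g - exp (-w)‖ * (P * P) ≤ 8 * ε * (P * P) + P * |P - 1| + P * |w.im| := by
    have h := norm_one_sub_exp_neg_le w
    rw [hPinv] at h
    have hsplit : ‖g - exp (-w)‖ ≤ ‖g - 1‖ + ‖1 - exp (-w)‖ :=
      norm_sub_le_norm_sub_add_norm_sub _ _ _
    have hid : |1 - P⁻¹| * (P * P) = P * |P - 1| := by
      rw [show 1 - P⁻¹ = (P - 1) / P by field_simp, abs_div, abs_of_pos hP0]; field_simp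
    calc ‖g - exp (-w)‖ * (P * P)
        ≤ (8 * ε + (|1 - P⁻¹| + P⁻¹ * |w.im|)) * (P * P) := by gcongr; linarith
      _ = 8 * ε * (P * P) + P * |P - 1| + P * |w.im| := by
        rw [add_mul, add_mul, hid]; field_simp; ring
  have hB : 8 * ε * (P * P) + P * |P - 1| + P * |w.im| ≤ 1 / 4 + 24 * ε := by
    have hPP : P * P ≤ (1 + 2 * ε) * (1 + 2 * ε) := mul_le_mul hP hP hP0.le (by linarith)
    have hPv : P * |w.im| ≤ (1 + 2 * ε) * (12 * ε) := mul_le_mul hP hv (abs_nonneg _) (by linarith)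
    have hεε : ε * ε ≤ ε / 1000 := by nlinarith
    nlinarith [mul_abs_sub_one_le hε (by linarith) hP,
      mul_le_mul_of_nonneg_left hPP (by linarith : 0 ≤ 8 * ε)]
  rw [hexp2, mul_assoc]
  calc ‖g‖ * (‖g - exp (-w)‖ * (P * P)) ≤ (1 + 8 * ε) * (1 / 4 + 24 * ε) :=
        mul_le_mul hgn (hW.trans hB) (by positivity) (by linarith)
    _ ≤ 1 / 4 + 30 * ε := by nlinarith

theorem exp_two_mul_re_eq {F s z w : ℂ} (h : F * (F - exp (-s)) = 1) (hs : s = z + w) :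
    Real.exp (2 * s.re) = ‖F * exp z‖ * ‖F * exp z - exp (-w)‖ * Real.exp (2 * w.re) := by
  have hexp : exp (-s) * exp z = exp (-w) := by rw [← exp_add, hs]; ring_nf
  have hprod : F * exp z * (F * exp z - exp (-w)) = exp (2 * z) := by
    rw [two_mul, exp_add]; linear_combination (exp z * exp z) * h + (F * exp z) * hexp
  rw [← norm_mul, hprod, norm_exp, hs, add_re, ← Real.exp_add]
  congr 1; simp; ring

theorem le_neg_log_two_add_of_exp_two_mul_le {t ε : ℝ}
    (h : Real.exp (2 * t) ≤ 1 / 4 + 30 * ε) : t ≤ -Real.log 2 + 60 * ε := by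
  have h4 : Real.exp (2 * Real.log 2) = 4 := by
    rw [two_mul, Real.exp_add, Real.exp_log two_pos]; norm_num
  have hle : Real.exp (2 * t) ≤ Real.exp (2 * (-Real.log 2 + 60 * ε)) := by
    rw [show 2 * (-Real.log 2 + 60 * ε) = 120 * ε - 2 * Real.log 2 by ring, Real.exp_sub, h4]
    linarith [Real.add_one_le_exp (120 * ε)]
  linarith [Real.exp_le_exp.mp hle]

theorem re_le_neg_log_two_add_of_charEq {η : ℝ} (hη : 0 < η) (hη' : η ≤ (1 / 1000) ^ 2) {s : ℂ}
    (hs : f η s ^ 2 - f η s * exp (-s) - 1 = 0) : s.re ≤ -Real.log 2 + 60 * √η := by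
  have hσ : √η ≤ 1 / 1000 := Real.sqrt_le_iff.mpr ⟨by norm_num, hη'⟩
  have hη100 : η ≤ 1 / 100 := by linarith
  rcases le_or_gt s.re (-Real.log 2) with hs' | hs'
  · linarith [Real.sqrt_nonneg η]
  have hF : f η s * (f η s - exp (-s)) = 1 := by linear_combination hs
  have hes : ‖exp (-s)‖ ≤ 2 := by
    rw [norm_exp, neg_re, ← Real.exp_log (x := 2) two_pos]
    exact Real.exp_le_exp.mpr (by linarith)
  obtain ⟨hF1, hF2⟩ := norm_bounds_of_mul_sub_eq_one hF hes
  set r := (1 + 4 * (η : ℂ) * s) ^ ((1 : ℂ) / 2) with hr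
  set z := (r - 1) / (2 * η) with hz
  have hrz : r = 1 + 2 * η * z := by
    have : (η : ℂ) ≠ 0 := ofReal_ne_zero.mpr hη.ne'
    rw [hz]; field_simp; ring
  have hsz : s = z + η * z ^ 2 := eq_add_mul_sq hη.ne' (cpow_one_half_mul_self _) hrz
  have hs7 : -7 / 10 ≤ s.re := by linarith [Real.log_two_lt_d9]
  obtain ⟨hρ, hrρ⟩ := le_re_sqrt_and_norm_le hη hη100 hs7
  have hfg := f_mul_exp hη.ne' hr.symm
  obtain ⟨hg1, hg2⟩ := norm_two_mul_div_denom_bounds hη hη100 hρ hrρ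
  have hx : |z.re| ≤ 3 :=
    abs_le_three_of_mul_exp_eq hF1 hF2 hg1 hg2 (by rw [← norm_exp, ← norm_mul, hfg])
  have hzη : η * ‖z‖ ≤ 2 * √η := mul_norm_le_two_sqrt hη hη100 hs7 hsz hx
  have hg : ‖2 * r / denom η r - 1‖ ≤ 8 * √η :=
    calc _ ≤ 2 * ‖r - 1‖ := norm_two_mul_div_denom_sub_one_le hη hη100 hρ hrρ
      _ = 4 * (η * ‖z‖) := by
        rw [hrz, add_sub_cancel_left, norm_mul, norm_mul, Complex.norm_two, norm_real,
          Real.norm_of_nonneg hη.le]; ring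
      _ ≤ 8 * √η := by linarith
  have hu : (η * z ^ 2).re ≤ √η := by
    have := Real.sq_sqrt hη.le
    nlinarith [re_mul_sq_le hη.le hx, Real.sqrt_nonneg η]
  apply le_neg_log_two_add_of_exp_two_mul_le
  rw [exp_two_mul_re_eq hF hsz, hfg]
  exact norm_mul_norm_sub_exp_mul_exp_le (Real.sqrt_nonneg η) hσ hg hu
    (abs_im_mul_sq_le hη.le hx hzη)

end ViscousTransport

theorem stmt_0 :
    ∀ δ : ℝ, 0 < δ → ∃ η₁ : ℝ, 0 < η₁ ∧
      ∀ η : ℝ, 0 < η → η < η₁ →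
        ∀ s : ℂ, f η s ^ 2 - f η s * Complex.exp (-s) - 1 = 0 →
          s.re ≤ -Real.log 2 + δ := by
  intro δ hδ
  refine ⟨min ((1 / 1000) ^ 2) ((δ / 60) ^ 2), by positivity, fun η hη hη₁ s hs => ?_⟩
  have hσ : 60 * √η < δ := by
    have := Real.sqrt_lt_sqrt hη.le (hη₁.trans_le (min_le_right _ _))
    rw [Real.sqrt_sq (by positivity)] at this
    linarith
  linarith [ViscousTransport.re_le_neg_log_two_add_of_charEq hη
    (hη₁.le.trans (min_le_left _ _)) hs]
end

section
/- Let k₁, k₂ ∈ ℝ and θ₂, θ₃ > 0, and set β = 4k₁² + θ₂² + θ₂⁻² + θ₃² + k₂²·θ₃⁻² and γ = 1 + θ₂⁻²·θ₃² + k₂² + k₂²·θ₂²·θ₃⁻². Then β² − 4γ ≥ 0 and √((β + √(β² − 4γ))/2) ≥ |k₁| + √(1 + k₁² + |k₂|); moreover, if k₂ ≠ 0, θ₂ = 1 and θ₃ = √|k₂|, then equality holds in the latter inequality. -/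
set_option maxHeartbeats 1000000

theorem stmt_8 (k₁ k₂ θ₂ θ₃ : ℝ) (hθ₂ : 0 < θ₂) (hθ₃ : 0 < θ₃)
    (β γ : ℝ)
    (hβ : β = 4 * k₁ ^ 2 + (θ₂ ^ 2 + (θ₂ ^ 2)⁻¹) + (θ₃ ^ 2 + k₂ ^ 2 * (θ₃ ^ 2)⁻¹))
    (hγ : γ = 1 + (θ₂ ^ 2)⁻¹ * θ₃ ^ 2 + k₂ ^ 2 + k₂ ^ 2 * θ₂ ^ 2 * (θ₃ ^ 2)⁻¹) :
    0 ≤ β ^ 2 - 4 * γ ∧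
    |k₁| + Real.sqrt (1 + k₁ ^ 2 + |k₂|) ≤
      Real.sqrt ((β + Real.sqrt (β ^ 2 - 4 * γ)) / 2) ∧
    (k₂ ≠ 0 → θ₂ = 1 → θ₃ = Real.sqrt |k₂| →
      Real.sqrt ((β + Real.sqrt (β ^ 2 - 4 * γ)) / 2) =
        |k₁| + Real.sqrt (1 + k₁ ^ 2 + |k₂|)) := by
  set c : ℝ := |k₁| with hcdef
  set m : ℝ := |k₂| with hmdef
  have hc0 : (0:ℝ) ≤ c := abs_nonneg _
  have hm0 : (0:ℝ) ≤ m := abs_nonneg _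
  set p : ℝ := θ₂ ^ 2 with hpdef
  set q : ℝ := θ₃ ^ 2 with hqdef
  have hp : 0 < p := by positivity
  have hq : 0 < q := by positivity
  have hV : 0 < p * q := mul_pos hp hq
  have hk1 : k₁ ^ 2 = c ^ 2 := (sq_abs k₁).symm
  have hk2 : k₂ ^ 2 = m ^ 2 := (sq_abs k₂).symm
  set t : ℝ := Real.sqrt (1 + k₁ ^ 2 + m) with htdef
  have ht0 : 0 ≤ t := Real.sqrt_nonneg _
  have ht2 : t ^ 2 = 1 + c ^ 2 + m := by
    rw [htdef, Real.sq_sqrt (by positivity), hk1]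
  have hβpq : β * (p * q) =
      4 * c ^ 2 * (p * q) + p ^ 2 * q + q + p * q ^ 2 + m ^ 2 * p := by
    rw [hβ, hk1, hk2]; field_simp; ring
  have hγpq : γ * (p * q) =
      p * q + q ^ 2 + m ^ 2 * (p * q) + m ^ 2 * p ^ 2 := by
    rw [hγ, hk2]; field_simp
  have hDpq : (β ^ 2 - 4 * γ) * (p * q) ^ 2 =
      ((4 * c ^ 2 + p + q) * (p * q) - (q + m ^ 2 * p)) ^ 2
        + 16 * c ^ 2 * ((q + m ^ 2 * p) * (p * q)) := by
    linear_combination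
      (β * (p * q) + (4 * c ^ 2 * (p * q) + p ^ 2 * q + q + p * q ^ 2 + m ^ 2 * p)) * hβpq
        - 4 * (p * q) * hγpq
  have hD : 0 ≤ β ^ 2 - 4 * γ := by
    have h0 : 0 ≤ (β ^ 2 - 4 * γ) * (p * q) ^ 2 := by
      rw [hDpq]; positivity
    exact (mul_nonneg_iff_of_pos_right (by positivity)).mp h0
  have hu : (c + t) ^ 2 = 1 + m + 2 * c ^ 2 + 2 * c * t := by linear_combination ht2
  refine ⟨hD, ?_, ?_⟩
  · -- main inequality
    have hs2 : (c + t) ^ 2 ≤ (β + Real.sqrt (β ^ 2 - 4 * γ)) / 2 := by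
      rcases le_or_gt (2 * (c + t) ^ 2) β with h2u | h2u
      · have := Real.sqrt_nonneg (β ^ 2 - 4 * γ)
        linarith
      · -- hard case
        have hβV : β * (p * q) < 2 * (c + t) ^ 2 * (p * q) :=
          mul_lt_mul_of_pos_right h2u hV
        have he : (p - 1) ^ 2 * q + (q - m) ^ 2 * p - 4 * (c * t) * (p * q)
            = β * (p * q) - 2 * (c + t) ^ 2 * (p * q) := by
          linear_combination -hβpq + 2 * (p * q) * ht2
        have hW : (p - 1) ^ 2 * q + (q - m) ^ 2 * p < 4 * (c * t) * (p * q) := by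
          linarith
        have hW0 : 0 ≤ (p - 1) ^ 2 * q + (q - m) ^ 2 * p := by positivity
        have hnum' : 0 ≤ (1 + m + 2 * c ^ 2 + 2 * c * t) *
            ((p - 1) ^ 2 * q + (q - m) ^ 2 * p) - (q - m * p) ^ 2 := by
          have hkey : ((1 + m + 2 * c ^ 2 + 2 * c * t) *
                ((p - 1) ^ 2 * q + (q - m) ^ 2 * p) - (q - m * p) ^ 2) * (p * q)
              = ((p - 1) ^ 2 * q + (q - m) ^ 2 * p) *
                  ((1 + m + 2 * c ^ 2 + 2 * c * t) * (p * q) - (q + m ^ 2 * p))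
                + ((1 + m) * (p * q) - (q + m ^ 2 * p)) ^ 2 := by ring
          refine (mul_nonneg_iff_of_pos_right hV).mp ?_
          rw [hkey]
          rcases le_or_gt (q + m ^ 2 * p)
              ((1 + m + 2 * c ^ 2 + 2 * c * t) * (p * q)) with hδ | hδ
          · exact add_nonneg (mul_nonneg hW0 (by linarith)) (sq_nonneg _)
          · have hδ' : 0 ≤ (q + m ^ 2 * p)
                - (1 + m + 2 * c ^ 2 + 2 * c * t) * (p * q) := by linarith
            have hcert : ((p - 1) ^ 2 * q + (q - m) ^ 2 * p) *
                  ((1 + m + 2 * c ^ 2 + 2 * c * t) * (p * q) - (q + m ^ 2 * p))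
                + ((1 + m) * (p * q) - (q + m ^ 2 * p)) ^ 2
                = (4 * (c * t) * (p * q) - ((p - 1) ^ 2 * q + (q - m) ^ 2 * p)) *
                    ((q + m ^ 2 * p) - (1 + m + 2 * c ^ 2 + 2 * c * t) * (p * q))
                  + ((q + m ^ 2 * p) - (1 + m + 2 * c ^ 2 + 2 * c * t) * (p * q)
                      - (2 * c ^ 2 + 2 * c * t) * (p * q)) ^ 2
                  + 4 * ((p * q) * ((q + m ^ 2 * p)
                      - (1 + m + 2 * c ^ 2 + 2 * c * t) * (p * q))) * (c * (2 * c + t)) := by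
              ring
            rw [hcert]
            have h1 : 0 ≤ (4 * (c * t) * (p * q)
                - ((p - 1) ^ 2 * q + (q - m) ^ 2 * p)) *
                ((q + m ^ 2 * p) - (1 + m + 2 * c ^ 2 + 2 * c * t) * (p * q)) :=
              mul_nonneg (by linarith) hδ'
            have h3 : 0 ≤ 4 * ((p * q) * ((q + m ^ 2 * p)
                - (1 + m + 2 * c ^ 2 + 2 * c * t) * (p * q))) * (c * (2 * c + t)) := by
              have hcc : (0:ℝ) ≤ c * (2 * c + t) := mul_nonneg hc0 (by linarith)
              have := mul_nonneg (mul_nonneg hV.le hδ') hcc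
              linarith
            have h2 : 0 ≤ ((q + m ^ 2 * p) - (1 + m + 2 * c ^ 2 + 2 * c * t) * (p * q)
                - (2 * c ^ 2 + 2 * c * t) * (p * q)) ^ 2 := sq_nonneg _
            linarith
        have hnum : 0 ≤ (c + t) ^ 2 * ((p - 1) ^ 2 * q + (q - m) ^ 2 * p)
            - (q - m * p) ^ 2 := by rw [hu]; exact hnum'
        have hid : p * q * ((c + t) ^ 2 * β - (c + t) ^ 4 - γ) =
            (c + t) ^ 2 * ((p - 1) ^ 2 * q + (q - m) ^ 2 * p) - (q - m * p) ^ 2 := by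
          linear_combination (c + t) ^ 2 * hβpq - hγpq
            + (p * q * (t ^ 2 - c ^ 2 + 1 + m) - 2 * (p * q) * (c + t) ^ 2) * ht2
        have hqu : (c + t) ^ 4 - β * (c + t) ^ 2 + γ ≤ 0 := by
          have h0 : 0 ≤ ((c + t) ^ 2 * β - (c + t) ^ 4 - γ) * (p * q) := by
            rw [mul_comm]; rw [hid]; exact hnum
          have := (mul_nonneg_iff_of_pos_right hV).mp h0
          linarith
        have hexp : (2 * (c + t) ^ 2 - β) ^ 2 - (β ^ 2 - 4 * γ)
            = 4 * ((c + t) ^ 4 - β * (c + t) ^ 2 + γ) := by ring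
        have hsq : (2 * (c + t) ^ 2 - β) ^ 2 ≤ β ^ 2 - 4 * γ := by linarith
        have hle : 2 * (c + t) ^ 2 - β ≤ Real.sqrt (β ^ 2 - 4 * γ) :=
          Real.le_sqrt_of_sq_le hsq
        linarith
    exact Real.le_sqrt_of_sq_le hs2
  · -- equality case
    intro hk2ne hθ2 hθ3
    have hm1 : 0 < m := abs_pos.mpr hk2ne
    have hp1 : p = 1 := by rw [hpdef, hθ2]; norm_num
    have hq1 : q = m := by rw [hqdef, hθ3]; exact Real.sq_sqrt hm0
    have hβ2 : β = 4 * c ^ 2 + 2 + 2 * m := by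
      rw [hβ, hk1, hk2, hp1, hq1]
      field_simp
      ring
    have hγ2 : γ = (1 + m) ^ 2 := by
      rw [hγ, hk2, hp1, hq1]
      field_simp
      ring
    have hD2 : β ^ 2 - 4 * γ = (4 * (c * t)) ^ 2 := by
      rw [hβ2, hγ2]; linear_combination (-16 * c ^ 2) * ht2
    have hct : (0:ℝ) ≤ c * t := mul_nonneg hc0 ht0
    have hsqrtD : Real.sqrt (β ^ 2 - 4 * γ) = 4 * (c * t) := by
      rw [hD2, Real.sqrt_sq (by linarith)]
    have hhalf : (β + 4 * (c * t)) / 2 = (c + t) ^ 2 := by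
      rw [hβ2]; linear_combination -ht2
    rw [hsqrtD, hhalf, Real.sqrt_sq (by linarith)]
end

section
/- Let τ > 0, k₁, k₂ ∈ ℝ and r > 0 be such that every complex root w of the polynomial w² + 2k₁·w + (k₂ − 1) satisfies |w| ≤ r. Then every s ∈ ℂ satisfying e^{2sτ} + 2k₁·e^{sτ} + (k₂ − 1) = 0 has Re(s) ≤ (ln r)/τ; in particular, if r < 1 then Re(s) < 0. -/
/-!
Substituting `w = exp (s τ)` turns the characteristic equation into the quadratic
`w² + 2 k₁ w + (k₂ - 1) = 0`, so `|exp (s τ)| = exp (τ Re s)` is at most `r`; taking logarithms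
gives `Re s ≤ (log r) / τ`, which is negative when `r < 1`.
-/

open Complex

theorem Complex.norm_exp_mul_ofReal_le_iff {τ r : ℝ} (hτ : 0 < τ) (hr : 0 < r) (s : ℂ) :
    ‖exp (s * τ)‖ ≤ r ↔ s.re ≤ Real.log r / τ := by
  rw [norm_exp, re_mul_ofReal, le_div_iff₀ hτ, Real.le_log_iff_exp_le hr]

theorem Complex.exp_two_mul_mul (s t : ℂ) : exp (2 * s * t) = exp (s * t) ^ 2 := by
  rw [← exp_nat_mul, mul_assoc]
  norm_num

theorem stmt_13 (τ k₁ k₂ r : ℝ) (hτ : 0 < τ) (hr : 0 < r)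
    (hroots : ∀ w : ℂ, w ^ 2 + 2 * (k₁ : ℂ) * w + ((k₂ : ℂ) - 1) = 0 → ‖w‖ ≤ r) :
    ∀ s : ℂ,
      Complex.exp (2 * s * (τ : ℂ)) + 2 * (k₁ : ℂ) * Complex.exp (s * (τ : ℂ)) +
        ((k₂ : ℂ) - 1) = 0 →
      s.re ≤ Real.log r / τ ∧ (r < 1 → s.re < 0) := by
  intro s hs
  rw [exp_two_mul_mul] at hs
  have hre : s.re ≤ Real.log r / τ := (norm_exp_mul_ofReal_le_iff hτ hr s).1 (hroots _ hs)
  exact ⟨hre, fun hr₁ => hre.trans_lt (div_neg_of_neg_of_pos (Real.log_neg hr hr₁) hτ)⟩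
end

section
/- Let τ > 0, k₁, k₂ ∈ ℝ and r ∈ (0,1) be such that every complex root w of the polynomial w² + 2k₁·w + (k₂ − 1) satisfies |w| < r. Then there exists C > 0 such that for every M ≥ 0 and every function Y : ℝ → ℝ satisfying Y(t) + 2k₁·Y(t−τ) + (k₂ − 1)·Y(t−2τ) = 0 for all t ≥ 0 and |Y(s)| ≤ M for all s ∈ [−2τ, 0], one has |Y(t)| ≤ C·r^{t/τ}·M for all t ≥ 0. -/
/-!
Factor the characteristic polynomial as `(w - α)(w - β)` with `‖α‖, ‖β‖ ≤ s < r`. Sampling `Y`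
along an arithmetic progression of step `τ` that starts in the initial interval gives a sequence
with `y (n + 2) = (α + β) y (n + 1) - α β y n`; then `y (n + 1) - α y n = βⁿ (y 1 - α y 0)`, so
`‖y (n + 1)‖ ≤ (n + 1) sⁿ (‖y 1‖ + s ‖y 0‖)`, and the polynomial factor `n + 1` is absorbed by
passing from `s` to `r`.
-/

theorem IsAlgClosed.exists_add_eq_and_mul_eq {K : Type*} [Field K] [IsAlgClosed K] (p q : K) :
    ∃ α β : K, α + β = -(2 * p) ∧ α * β = q := by
  obtain ⟨δ, hδ⟩ := IsAlgClosed.exists_eq_mul_self (p ^ 2 - q)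
  exact ⟨-p + δ, -p - δ, by ring, by linear_combination hδ⟩

theorem exists_add_one_mul_pow_le {s r : ℝ} (hs : 0 ≤ s) (hsr : s < r) :
    ∃ C, 0 < C ∧ ∀ n : ℕ, (n + 1) * s ^ n ≤ C * r ^ n := by
  have hr : 0 < r := hs.trans_lt hsr
  set q := s / r
  have hq : 0 ≤ q := by positivity
  have hq1 : q < 1 := (div_lt_one hr).2 hsr
  have hlim : Filter.Tendsto (fun n : ℕ => (n + 1) * q ^ n) Filter.atTop (nhds 0) := by
    simpa [add_mul] using (tendsto_self_mul_const_pow_of_lt_one hq hq1).add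
      (tendsto_pow_atTop_nhds_zero_of_lt_one hq hq1)
  obtain ⟨C, hC⟩ := hlim.bddAbove_range
  refine ⟨max C 1, by positivity, fun n => ?_⟩
  calc (n + 1) * s ^ n = (n + 1) * q ^ n * r ^ n := by rw [div_pow]; field_simp
    _ ≤ max C 1 * r ^ n := by
      gcongr
      exact (hC (Set.mem_range_self n)).trans (le_max_left _ _)

section LinearRecurrence

variable {R : Type*} {α β : R} {y : ℕ → R}

theorem sub_mul_eq_pow_mul_of_recurrence [CommRing R]
    (hy : ∀ n, y (n + 2) = (α + β) * y (n + 1) - α * β * y n) (n : ℕ) :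
    y (n + 1) - α * y n = β ^ n * (y 1 - α * y 0) := by
  induction n with
  | zero => ring
  | succ n ih => linear_combination hy n + β * ih

theorem norm_succ_le_of_recurrence [SeminormedCommRing R]
    (hy : ∀ n, y (n + 2) = (α + β) * y (n + 1) - α * β * y n) {s : ℝ} (hα : ‖α‖ ≤ s)
    (hβ : ‖β‖ ≤ s) (n : ℕ) :
    ‖y (n + 1)‖ ≤ (n + 1) * s ^ n * (‖y 1‖ + s * ‖y 0‖) := by
  have hs : 0 ≤ s := (norm_nonneg α).trans hα
  set B := ‖y 1‖ + s * ‖y 0‖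
  have hB : ‖y 1 - α * y 0‖ ≤ B := by
    grw [norm_sub_le, norm_mul_le, hα]
  induction n with
  | zero => simpa using le_add_of_nonneg_right (by positivity)
  | succ n ih =>
    have hz : ‖β ^ (n + 1) * (y 1 - α * y 0)‖ ≤ s ^ (n + 1) * B := by
      grw [norm_mul_le, norm_pow_le' _ n.succ_pos, hβ, hB]
    calc ‖y (n + 2)‖ = ‖α * y (n + 1) + β ^ (n + 1) * (y 1 - α * y 0)‖ := by
          rw [← sub_mul_eq_pow_mul_of_recurrence hy]; ring_nf
      _ ≤ s * ((n + 1) * s ^ n * B) + s ^ (n + 1) * B := by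
          grw [norm_add_le, norm_mul_le, hα, ih, hz]
      _ = ((n + 1 : ℕ) + 1) * s ^ (n + 1) * B := by push_cast; ring

end LinearRecurrence

theorem exists_eq_add_nat_add_two_mul {τ t : ℝ} (hτ : 0 < τ) (ht : 0 ≤ t) :
    ∃ n : ℕ, ∃ a ∈ Set.Ico (-(2 * τ)) (-τ), t = a + (n + 2) * τ := by
  refine ⟨⌊t / τ⌋₊, t - (⌊t / τ⌋₊ + 2) * τ, ⟨?_, ?_⟩, by ring⟩
  · nlinarith [Nat.floor_le (div_nonneg ht hτ.le), div_mul_cancel₀ t hτ.ne']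
  · nlinarith [Nat.lt_floor_add_one (t / τ), div_mul_cancel₀ t hτ.ne']

theorem delay_sample_recurrence {Y : ℝ → ℝ} {τ k₁ k₂ a : ℝ}
    (hrec : ∀ t, 0 ≤ t → Y t + 2 * k₁ * Y (t - τ) + (k₂ - 1) * Y (t - 2 * τ) = 0)
    (hτ : 0 ≤ τ) (ha : -(2 * τ) ≤ a) (j : ℕ) :
    Y (a + (j + 2 : ℕ) * τ) =
      -(2 * k₁) * Y (a + (j + 1 : ℕ) * τ) - (k₂ - 1) * Y (a + j * τ) := by
  have h := hrec (a + (j + 2 : ℕ) * τ) (by push_cast; nlinarith [j.cast_nonneg (α := ℝ)])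
  push_cast at h ⊢
  rw [show a + (j + 2) * τ - τ = a + (j + 1) * τ by ring,
    show a + (j + 2) * τ - 2 * τ = a + j * τ by ring] at h
  linarith

theorem stmt_14 (τ k₁ k₂ r : ℝ) (hτ : 0 < τ) (hr : 0 < r) (hr1 : r < 1)
    (hroots : ∀ w : ℂ, w ^ 2 + 2 * (k₁ : ℂ) * w + ((k₂ : ℂ) - 1) = 0 → ‖w‖ < r) :
    ∃ C : ℝ, 0 < C ∧
      ∀ M : ℝ, 0 ≤ M →
        ∀ Y : ℝ → ℝ,
          (∀ t : ℝ, 0 ≤ t → Y t + 2 * k₁ * Y (t - τ) + (k₂ - 1) * Y (t - 2 * τ) = 0) →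
          (∀ s ∈ Set.Icc (-(2 * τ)) (0 : ℝ), |Y s| ≤ M) →
          ∀ t : ℝ, 0 ≤ t → |Y t| ≤ C * r ^ (t / τ) * M := by
  obtain ⟨α, β, hsum, hprod⟩ := IsAlgClosed.exists_add_eq_and_mul_eq (k₁ : ℂ) ((k₂ : ℂ) - 1)
  have hα := hroots α (by linear_combination α * hsum - hprod)
  have hβ := hroots β (by linear_combination β * hsum - hprod)
  obtain ⟨s, hαβs, hsr⟩ := exists_between (max_lt hα hβ)
  obtain ⟨hαs, hβs⟩ := max_lt_iff.1 hαβs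
  have hs₀ : 0 ≤ s := (norm_nonneg α).trans hαs.le
  obtain ⟨C, hC, hCs⟩ := exists_add_one_mul_pow_le hs₀ hsr
  refine ⟨2 * C, by positivity, fun M hM Y hrec hinit t ht => ?_⟩
  obtain ⟨n, a, ⟨ha₁, ha₂⟩, rfl⟩ := exists_eq_add_nat_add_two_mul hτ ht
  set y : ℕ → ℂ := fun j => (Y (a + j * τ) : ℂ)
  have hy : ∀ j, y (j + 2) = (α + β) * y (j + 1) - α * β * y j := fun j => by
    simp only [y, hsum, hprod]
    rw [delay_sample_recurrence hrec hτ.le ha₁]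
    push_cast; ring
  have hy₀ : ‖y 0‖ ≤ M := by simpa [y] using hinit a ⟨ha₁, by linarith⟩
  have hy₁ : ‖y 1‖ ≤ M := by simpa [y] using hinit (a + τ) ⟨by linarith, by linarith⟩
  have hexp : (a + (n + 2) * τ) / τ ≤ (n + 1 : ℕ) := by
    rw [div_le_iff₀ hτ]; push_cast; linarith
  calc |Y (a + (n + 2) * τ)| = ‖y (n + 1 + 1)‖ := by
        simp only [y, Complex.norm_real, Real.norm_eq_abs]; push_cast; ring_nf
    _ ≤ ((n + 1 : ℕ) + 1) * s ^ (n + 1) * (M + s * M) := by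
        grw [norm_succ_le_of_recurrence hy hαs.le hβs.le, hy₀, hy₁]
    _ ≤ C * r ^ (n + 1) * (2 * M) :=
        mul_le_mul (hCs (n + 1)) (by nlinarith) (by positivity) (by positivity)
    _ ≤ 2 * C * r ^ ((a + (n + 2) * τ) / τ) * M := by
        grw [← Real.rpow_natCast, Real.rpow_le_rpow_of_exponent_ge hr hr1.le hexp]
        exact le_of_eq (by ring)
end

section
/- Let η > 0 and s ∈ ℂ with 1 + 4ηs ≠ 0, and set λ₁ = (1 + √(1+4ηs))/(2η) and λ₂ = (1 − √(1+4ηs))/(2η), where √ denotes the principal branch of the complex square root. Let y : ℝ → ℂ be twice differentiable with s·y(x) + y′(x) − η·y″(x) = 0 for all x ∈ [0,1] and y′(1) = 0. Then (λ₁·e^{−λ₂} − λ₂·e^{−λ₁})·y(1) = (λ₁ − λ₂)·y(0). -/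
/-!
Factor the operator as `η (D - λ₁)(D - λ₂)`. For either ordering `(l, m)` of the roots,
`exp (-m x) (y' - l y)` has derivative `exp (-m x) (y'' - (l + m) y' + l m y) = 0`, so it takes
the same value at `0` and `1`. With `y'(1) = 0` this gives two linear relations between
`y(0)`, `y'(0)` and `y(1)`; eliminating `y'(0)` yields the identity.
-/

open Complex Set

theorem vieta_of_sq_eq {η s w : ℂ} (hη : η ≠ 0) (hw : w ^ 2 = 1 + 4 * η * s) :
    (1 + w) / (2 * η) + (1 - w) / (2 * η) = 1 / η ∧
      (1 + w) / (2 * η) * ((1 - w) / (2 * η)) = -s / η := by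
  constructor
  · field_simp
    ring
  · field_simp
    linear_combination -hw

theorem exp_mul_deriv_sub_eq_of_factored_ode {y : ℝ → ℂ} {l m : ℂ} {a b : ℝ} (hab : a ≤ b)
    (hy : Differentiable ℝ y) (hy' : Differentiable ℝ (deriv y))
    (hode : ∀ x ∈ Icc a b, deriv (deriv y) x = (l + m) * deriv y x - l * m * y x) :
    exp (-m * b) * (deriv y b - l * y b) = exp (-m * a) * (deriv y a - l * y a) := by
  set g : ℝ → ℂ := fun x => exp (-m * x) * (deriv y x - l * y x)
  have hg_cont : ContinuousOn g (Icc a b) :=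
    have := hy.continuous
    have := hy'.continuous
    (by fun_prop : Continuous g).continuousOn
  have hg_deriv : ∀ x ∈ Ico a b, HasDerivWithinAt g 0 (Ici x) x := by
    intro x hx
    have hexp : HasDerivAt (fun t : ℝ => exp (-m * t)) (exp (-m * x) * -m) x := by
      simpa using ((hasDerivAt_id x).ofReal_comp.const_mul (-m)).cexp
    have hdiff : HasDerivAt (fun t => deriv y t - l * y t)
        (deriv (deriv y) x - l * deriv y x) x :=
      (hy' x).hasDerivAt.sub ((hy x).hasDerivAt.const_mul l)
    have hzero : exp (-m * x) * -m * (deriv y x - l * y x)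
        + exp (-m * x) * (deriv (deriv y) x - l * deriv y x) = 0 := by
      linear_combination exp (-m * x) * hode x (Ico_subset_Icc_self hx)
    exact (hzero ▸ hexp.mul hdiff).hasDerivWithinAt
  exact constant_of_has_deriv_right_zero hg_cont hg_deriv b (right_mem_Icc.2 hab)

theorem stmt_15_general (η : ℝ) (hη : 0 < η) (s : ℂ)
    (l₁ l₂ : ℂ)
    (hl₁ : l₁ = (1 + (1 + 4 * (η : ℂ) * s) ^ ((1 : ℂ) / 2)) / (2 * (η : ℂ)))
    (hl₂ : l₂ = (1 - (1 + 4 * (η : ℂ) * s) ^ ((1 : ℂ) / 2)) / (2 * (η : ℂ)))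
    (y : ℝ → ℂ)
    (hy : Differentiable ℝ y) (hy' : Differentiable ℝ (deriv y))
    (hode : ∀ x ∈ Set.Icc (0 : ℝ) 1,
      s * y x + deriv y x - (η : ℂ) * deriv (deriv y) x = 0)
    (hbc : deriv y 1 = 0) :
    (l₁ * Complex.exp (-l₂) - l₂ * Complex.exp (-l₁)) * y 1 = (l₁ - l₂) * y 0 := by
  have hηc : (η : ℂ) ≠ 0 := by exact_mod_cast hη.ne'
  obtain ⟨hsum, hprod⟩ := vieta_of_sq_eq hηc
    (w := (1 + 4 * (η : ℂ) * s) ^ ((1 : ℂ) / 2)) (by rw [one_div]; exact cpow_ofNat_inv_pow _ 2)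
  rw [← hl₁, ← hl₂] at hsum hprod
  have hode' (l m : ℂ) (hlm : l + m = 1 / η) (hlm' : l * m = -s / η) :
      ∀ x ∈ Icc (0 : ℝ) 1, deriv (deriv y) x = (l + m) * deriv y x - l * m * y x := by
    intro x hx
    rw [hlm, hlm']
    field_simp
    linear_combination -hode x hx
  have h₁ := exp_mul_deriv_sub_eq_of_factored_ode zero_le_one hy hy' (hode' l₁ l₂ hsum hprod)
  have h₂ := exp_mul_deriv_sub_eq_of_factored_ode zero_le_one hy hy'
    (hode' l₂ l₁ (by rwa [add_comm]) (by rwa [mul_comm]))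
  simp only [ofReal_one, ofReal_zero, mul_one, mul_zero, exp_zero, one_mul, hbc] at h₁ h₂
  linear_combination h₂ - h₁

theorem stmt_15 (η : ℝ) (hη : 0 < η) (s : ℂ)
    (hsne : 1 + 4 * (η : ℂ) * s ≠ 0)
    (l₁ l₂ : ℂ)
    (hl₁ : l₁ = (1 + (1 + 4 * (η : ℂ) * s) ^ ((1 : ℂ) / 2)) / (2 * (η : ℂ)))
    (hl₂ : l₂ = (1 - (1 + 4 * (η : ℂ) * s) ^ ((1 : ℂ) / 2)) / (2 * (η : ℂ)))
    (y : ℝ → ℂ)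
    (hy : Differentiable ℝ y) (hy' : Differentiable ℝ (deriv y))
    (hode : ∀ x ∈ Set.Icc (0 : ℝ) 1,
      s * y x + deriv y x - (η : ℂ) * deriv (deriv y) x = 0)
    (hbc : deriv y 1 = 0) :
    (l₁ * Complex.exp (-l₂) - l₂ * Complex.exp (-l₁)) * y 1 = (l₁ - l₂) * y 0 :=
  stmt_15_general η hη s l₁ l₂ hl₁ hl₂ y hy hy' hode hbc
end

section
/- For every fixed s ∈ ℂ, f_η(s) converges to e^{−s} as η → 0⁺; that is, the transfer function of the viscous transport system converges to the pure delay transfer function as the viscosity tends to zero. -/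
open Filter

/-!
Write `w = √(1+4ηs)`, so that `λ₁ = (1+w)/(2η)` and `λ₂ = (1-w)/(2η)`. Clearing the factor `2η`,
`f_η(s) = 2w / ((1+w)e^{-λ₂} - (1-w)e^{-λ₁})`. As `η → 0⁺` we have `w → 1`; since
`(1-w)(1+w) = -4ηs`, the small root `λ₂ = -2s/(1+w)` tends to `-s`, while
`Re λ₁ = (1 + Re w)/(2η) → +∞`, so `e^{-λ₁} → 0`. Hence `f_η(s) → 2 / (2e^{s}) = e^{-s}`.
-/

open Topology

noncomputable def discRoot (η : ℝ) (s : ℂ) : ℂ := (1 + 4 * (η : ℂ) * s) ^ ((1 : ℂ) / 2)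

section

variable (s : ℂ)

lemma discRoot_sq (η : ℝ) : discRoot η s ^ 2 = 1 + 4 * η * s := by
  simp [discRoot]

lemma tendsto_discRoot : Tendsto (discRoot · s) (𝓝 0) (𝓝 1) := by
  have hbase : Tendsto (fun η : ℝ => 1 + 4 * (η : ℂ) * s) (𝓝 0) (𝓝 1) := by
    simpa using ((Complex.continuous_ofReal.tendsto 0).const_mul 4).mul_const s |>.const_add 1
  have := (continuousAt_cpow_const (b := 1 / 2) Complex.one_mem_slitPlane).tendsto.comp hbase
  rwa [Complex.one_cpow] at this

lemma lam2_eq_neg_two_mul_div {η : ℝ} (hη : η ≠ 0) (hw : 1 + discRoot η s ≠ 0) :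
    lam2 η s = -2 * s / (1 + discRoot η s) := by
  have hηc : (η : ℂ) ≠ 0 := by exact_mod_cast hη
  rw [lam2, ← discRoot]
  field_simp
  linear_combination -discRoot_sq s η

lemma tendsto_lam2 : Tendsto (lam2 · s) (𝓝[≠] 0) (𝓝 (-s)) := by
  have hw : Tendsto (discRoot · s) (𝓝[≠] 0) (𝓝 1) :=
    (tendsto_discRoot s).mono_left nhdsWithin_le_nhds
  have hlim : Tendsto (fun η => -2 * s / (1 + discRoot η s)) (𝓝[≠] 0) (𝓝 (-s)) := by
    have := (tendsto_const_nhds (x := -2 * s)).div (tendsto_const_nhds.add hw)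
      (by norm_num : (1 : ℂ) + 1 ≠ 0)
    rwa [show -2 * s / (1 + 1) = -s by ring] at this
  have hw_ne : ∀ᶠ η in 𝓝[≠] 0, 1 + discRoot η s ≠ 0 := by
    filter_upwards [hw.eventually_ne (show (1 : ℂ) ≠ -1 by norm_num)] with η h
    exact fun h' => h (by linear_combination h')
  refine hlim.congr' ?_
  filter_upwards [self_mem_nhdsWithin, hw_ne] with η hη hne
  exact (lam2_eq_neg_two_mul_div s hη hne).symm

lemma re_lam1 (η : ℝ) : (lam1 η s).re = (1 + (discRoot η s).re) / (2 * η) := by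
  rw [lam1, ← discRoot, show (2 * (η : ℂ)) = ((2 * η : ℝ) : ℂ) by push_cast; ring,
    Complex.div_ofReal_re, Complex.add_re, Complex.one_re]

lemma tendsto_re_lam1 : Tendsto (fun η => (lam1 η s).re) (𝓝[>] 0) atTop := by
  have hnum : Tendsto (fun η => 1 + (discRoot η s).re) (𝓝[>] 0) (𝓝 2) := by
    have := (Complex.continuous_re.tendsto 1).comp (tendsto_discRoot s)
    simpa [one_add_one_eq_two] using (this.const_add 1).mono_left nhdsWithin_le_nhds
  have hinv : Tendsto (fun η : ℝ => (2 * η)⁻¹) (𝓝[>] 0) atTop := by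
    refine (tendsto_inv_nhdsGT_zero.const_mul_atTop (inv_pos.2 two_pos)).congr fun η => ?_
    rw [mul_inv]
  simpa [re_lam1, div_eq_mul_inv] using hnum.pos_mul_atTop two_pos hinv

lemma tendsto_exp_neg_lam1 : Tendsto (fun η => Complex.exp (-lam1 η s)) (𝓝[>] 0) (𝓝 0) :=
  Complex.tendsto_exp_nhds_zero_iff.2 <| by simpa using tendsto_re_lam1 s

lemma f_eq_two_mul_discRoot_div {η : ℝ} (hη : η ≠ 0) :
    f η s = 2 * discRoot η s / ((1 + discRoot η s) * Complex.exp (-lam2 η s)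
      - (1 - discRoot η s) * Complex.exp (-lam1 η s)) := by
  have hηc : (η : ℂ) ≠ 0 := by exact_mod_cast hη
  rw [f, lam1, lam2, ← discRoot]
  set w := discRoot η s
  set A := Complex.exp (-((1 - w) / (2 * η)))
  set B := Complex.exp (-((1 + w) / (2 * η)))
  rw [show (1 + w) / (2 * η) - (1 - w) / (2 * η) = (2 * w) / (2 * η) by ring,
    show (1 + w) / (2 * η) * A - (1 - w) / (2 * η) * B = ((1 + w) * A - (1 - w) * B) / (2 * η) by
      ring]
  exact div_div_div_cancel_right₀ (mul_ne_zero two_ne_zero hηc) _ _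

end

theorem stmt_17 (s : ℂ) :
    Tendsto (fun η : ℝ => f η s) (nhdsWithin 0 (Set.Ioi 0))
      (nhds (Complex.exp (-s))) := by
  have hw : Tendsto (discRoot · s) (𝓝[>] 0) (𝓝 1) :=
    (tendsto_discRoot s).mono_left nhdsWithin_le_nhds
  have hexp₂ : Tendsto (fun η => Complex.exp (-lam2 η s)) (𝓝[>] 0) (𝓝 (Complex.exp s)) := by
    have := ((tendsto_lam2 s).mono_left (nhdsGT_le_nhdsNE 0)).neg
    rw [neg_neg] at this
    exact (Complex.continuous_exp.tendsto _).comp this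
  have hlim := (hw.const_mul 2).div
    (((tendsto_const_nhds.add hw).mul hexp₂).sub ((tendsto_const_nhds.sub hw).mul
      (tendsto_exp_neg_lam1 s)))
    (by simp [Complex.exp_ne_zero] : (1 + 1 : ℂ) * Complex.exp s - (1 - 1) * 0 ≠ 0)
  have hval : 2 * 1 / ((1 + 1 : ℂ) * Complex.exp s - (1 - 1) * 0) = Complex.exp (-s) := by
    rw [Complex.exp_neg]
    ring
  rw [hval] at hlim
  refine hlim.congr' ?_
  filter_upwards [self_mem_nhdsWithin] with η hη
  exact (f_eq_two_mul_discRoot_div s (ne_of_gt hη)).symm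
end

section
/- Let η > 0 and s ∈ ℂ, set z = √(1+4ηs) (principal branch), and assume λ₁(η,s)·e^{−λ₂(η,s)} − λ₂(η,s)·e^{−λ₁(η,s)} ≠ 0. Then f_η(s)² − f_η(s)·e^{−s} − 1 = 0 holds if and only if X_η(z)² + z·e^{−(z²−1)/(4η)}·X_η(z) − z² = 0. -/
/-- `X_η(z) = ((1+z)/2)·e^{−(1−z)/(2η)} − ((1−z)/2)·e^{−(1+z)/(2η)}`. -/
noncomputable def X (η : ℝ) (z : ℂ) : ℂ :=
  ((1 + z) / 2) * Complex.exp (-(1 - z) / (2 * (η : ℂ))) -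
    ((1 - z) / 2) * Complex.exp (-(1 + z) / (2 * (η : ℂ)))

theorem stmt_18 (η : ℝ) (hη : 0 < η) (s : ℂ)
    (hden : lam1 η s * Complex.exp (-(lam2 η s)) - lam2 η s * Complex.exp (-(lam1 η s)) ≠ 0)
    (z : ℂ) (hz : z = (1 + 4 * (η : ℂ) * s) ^ ((1 : ℂ) / 2)) :
    (f η s ^ 2 - f η s * Complex.exp (-s) - 1 = 0 ↔
      X η z ^ 2 + z * Complex.exp (-(z ^ 2 - 1) / (4 * (η : ℂ))) * X η z - z ^ 2 = 0) := by
  have hη0 : (η : ℂ) ≠ 0 := by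
    exact_mod_cast Complex.ofReal_ne_zero.mpr hη.ne'
  -- z^2 = 1 + 4ηs
  have hz2 : z ^ 2 = 1 + 4 * (η : ℂ) * s := by
    rw [hz]
    by_cases h0 : (1 + 4 * (η : ℂ) * s) = 0
    · rw [h0, Complex.zero_cpow (by norm_num : (1:ℂ)/2 ≠ 0)]; ring
    · rw [sq, ← Complex.cpow_add _ _ h0]
      norm_num
  -- lam1 and lam2 in terms of z
  have hl1 : lam1 η s = (1 + z) / (2 * (η : ℂ)) := by rw [lam1, hz]
  have hl2 : lam2 η s = (1 - z) / (2 * (η : ℂ)) := by rw [lam2, hz]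
  -- X = η * denominator
  have gen : ∀ A B : ℂ, (η : ℂ) * ((1 + z) / (2 * (η : ℂ)) * A - (1 - z) / (2 * (η : ℂ)) * B)
      = (1 + z) / 2 * A - (1 - z) / 2 * B := by
    intro A B; field_simp
  have hX : X η z = (η : ℂ) *
      (lam1 η s * Complex.exp (-(lam2 η s)) - lam2 η s * Complex.exp (-(lam1 η s))) := by
    rw [X, hl1, hl2]
    simp only [neg_div]
    exact (gen _ _).symm
  have hXne : X η z ≠ 0 := by
    rw [hX]; exact mul_ne_zero hη0 hden
  have hdiff : lam1 η s - lam2 η s = z / (η : ℂ) := by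
    rw [hl1, hl2]; field_simp; ring
  -- f = z / X
  have hf : f η s = z / X η z := by
    rw [f, hdiff, hX, div_div]
  -- exp(-s)
  have hs : -s = -(z ^ 2 - 1) / (4 * (η : ℂ)) := by
    rw [hz2]; field_simp; ring
  rw [hf, hs]
  set E := Complex.exp (-(z ^ 2 - 1) / (4 * (η : ℂ))) with hE
  have key : (z / X η z) ^ 2 - z / X η z * E - 1
      = -(X η z ^ 2 + z * E * X η z - z ^ 2) / X η z ^ 2 := by
    field_simp
    ring
  rw [key, div_eq_zero_iff, neg_eq_zero]
  simp [pow_eq_zero_iff, hXne]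
end

section
/- Let y and ŷ be real-valued continuously differentiable functions on [0,∞) × [0,1] satisfying the transport equations ∂_t y(t,x) + ∂_x y(t,x) = 0 and ∂_t ŷ(t,x) + ∂_x ŷ(t,x) = 0 for all (t,x) ∈ [0,∞) × [0,1], together with the boundary conditions y(t,0) = y(t,1) − ŷ(t,1) and ŷ(t,0) = y(t,1) − ŷ(t,1) for all t ≥ 0. Then y(t,x) = 0 for all t ≥ 2 and all x ∈ [0,1] (finite-time stability of the inviscid closed-loop system). -/
/-!
Along each characteristic `s ↦ (t₀ + s, s)` a solution of the transport equation is constant,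
so every value is carried from the inflow boundary `x = 0` in time `x`. Both boundary conditions
have the same right-hand side, so `y` and `ŷ` enter the domain with equal values; hence from
`t = 1` on they leave it with equal values, the feedback `y(t,1) - ŷ(t,1)` vanishes, `y(t,0) = 0`
for `t ≥ 1`, and this zero inflow fills the whole interval by `t = 2`.
-/

/-- The space-time domain `[0,∞) × [0,1]`. -/
def dom : Set (ℝ × ℝ) := Set.Ici (0 : ℝ) ×ˢ Set.Icc (0 : ℝ) 1

open Set

section Transport

variable {E : Type*} [NormedAddCommGroup E] [NormedSpace ℝ E] {f : ℝ × ℝ → E}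

theorem transport_eq_const_along_characteristic (hf : DifferentiableOn ℝ f dom)
    (hpde : ∀ p ∈ dom, fderivWithin ℝ f dom p (1, 0) + fderivWithin ℝ f dom p (0, 1) = 0)
    {t₀ : ℝ} (ht₀ : 0 ≤ t₀) {s : ℝ} (hs : s ∈ Icc (0 : ℝ) 1) :
    f (t₀ + s, s) = f (t₀, 0) := by
  set γ : ℝ → ℝ × ℝ := fun u => (t₀ + u, u)
  have hγ : MapsTo γ (Icc 0 1) dom := fun u hu => ⟨by simpa using add_nonneg ht₀ hu.1, hu⟩
  have hderiv : ∀ u ∈ Icc (0 : ℝ) 1, HasDerivWithinAt (f ∘ γ) 0 (Icc 0 1) u := by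
    intro u hu
    have hγ' : HasDerivWithinAt γ ((1, 0) + (0, 1)) (Icc 0 1) u := by
      simpa using ((hasDerivWithinAt_id u _).const_add t₀).prodMk (hasDerivWithinAt_id u _)
    have := (hf (γ u) (hγ hu)).hasFDerivWithinAt.comp_hasDerivWithinAt u hγ' hγ
    rwa [map_add, hpde (γ u) (hγ hu)] at this
  have hconst := constant_of_derivWithin_zero
    (fun u hu => (hderiv u hu).differentiableWithinAt)
    (fun u hu => (hderiv u (Ico_subset_Icc_self hu)).derivWithin
      (uniqueDiffOn_Icc zero_lt_one u (Ico_subset_Icc_self hu))) s hs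
  simpa [γ] using hconst

theorem transport_eq_inflow (hf : DifferentiableOn ℝ f dom)
    (hpde : ∀ p ∈ dom, fderivWithin ℝ f dom p (1, 0) + fderivWithin ℝ f dom p (0, 1) = 0)
    ⦃t x : ℝ⦄ (hx : x ∈ Icc (0 : ℝ) 1) (hxt : x ≤ t) :
    f (t, x) = f (t - x, 0) := by
  simpa using transport_eq_const_along_characteristic hf hpde (sub_nonneg.2 hxt) hx

end Transport

theorem stmt_19 (y yhat : ℝ × ℝ → ℝ)
    (hy : ContDiffOn ℝ 1 y dom)
    (hyhat : ContDiffOn ℝ 1 yhat dom)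
    (hpde_y : ∀ p ∈ dom,
      fderivWithin ℝ y dom p (1, 0) + fderivWithin ℝ y dom p (0, 1) = 0)
    (hpde_yhat : ∀ p ∈ dom,
      fderivWithin ℝ yhat dom p (1, 0) + fderivWithin ℝ yhat dom p (0, 1) = 0)
    (hbc_y : ∀ t : ℝ, 0 ≤ t → y (t, 0) = y (t, 1) - yhat (t, 1))
    (hbc_yhat : ∀ t : ℝ, 0 ≤ t → yhat (t, 0) = y (t, 1) - yhat (t, 1)) :
    ∀ t : ℝ, 2 ≤ t → ∀ x ∈ Set.Icc (0 : ℝ) 1, y (t, x) = 0 := by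
  have hy_inflow := transport_eq_inflow (hy.differentiableOn one_ne_zero) hpde_y
  have hyhat_inflow := transport_eq_inflow (hyhat.differentiableOn one_ne_zero) hpde_yhat
  have houtflow : ∀ t : ℝ, 1 ≤ t → y (t, 1) = yhat (t, 1) := by
    intro t ht
    have hmem : (1 : ℝ) ∈ Icc (0 : ℝ) 1 := right_mem_Icc.2 zero_le_one
    rw [hy_inflow hmem ht, hyhat_inflow hmem ht, hbc_y _ (by linarith),
      hbc_yhat _ (by linarith)]
  intro t ht x hx
  rw [hy_inflow hx (by linarith [hx.2]), hbc_y _ (by linarith [hx.2]),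
    houtflow _ (by linarith [hx.2]), sub_self]
end
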